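/- arXiv:2411.18987 — 4 statements merged into one kernel-verified Lean document; each statement's English description precedes it below -/
import Mathlib

section
/- For any connected threshold graph G with at least 2 vertices, the quadruple Roman domination number of G equals 5. -/
open scoped Classical
open Finset

/-- A quadruple Roman dominating function: labels in {0,…,5}, and every vertex with
label at most 3 satisfies the quadruple Roman condition. -/
def Is4RDF {V : Type*} [Fintype V] (G : SimpleGraph V) (f : V → ℕ) : Prop :=
  (∀ v, f v ≤ 5) ∧
  ∀ x, f x ≤ 3 →
    f x + ∑ v ∈ G.neighborFinset x, f v ≥
      ((G.neighborFinset x).filter fun y => f y ≠ 0).card + 4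

/-- The weight of a labelling. -/
def rdfWeight {V : Type*} [Fintype V] (f : V → ℕ) : ℕ := ∑ v, f v

/-- The quadruple Roman domination number. -/
noncomputable def gamma4R {V : Type*} [Fintype V] (G : SimpleGraph V) : ℕ :=
  sInf {w | ∃ f, Is4RDF G f ∧ rdfWeight f = w}

/-- A dominating set. -/
def IsDomSet {V : Type*} [Fintype V] (G : SimpleGraph V) (D : Finset V) : Prop :=
  ∀ v, v ∉ D → ∃ u ∈ D, G.Adj u v

/-- The domination number. -/
noncomputable def gammaDom {V : Type*} [Fintype V] (G : SimpleGraph V) : ℕ :=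
  sInf {n | ∃ D : Finset V, IsDomSet G D ∧ D.card = n}

/-- An efficient dominating set: every vertex lies in exactly one closed
neighborhood of a vertex of `D`. -/
def IsEfficientDomSet {V : Type*} [Fintype V] (G : SimpleGraph V) (D : Finset V) : Prop :=
  ∀ v : V, ∃! u, u ∈ D ∧ (u = v ∨ G.Adj u v)

/-- A threshold graph: a split graph whose independent part has neighborhoods
linearly ordered by inclusion and whose clique part has closed neighborhoods
linearly ordered by inclusion. -/
def IsThresholdGraph {V : Type*} [Fintype V] (G : SimpleGraph V) : Prop :=
  ∃ (C I : Finset V) (xl yl : List V),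
    (∀ v, v ∈ C ∨ v ∈ I) ∧ Disjoint C I ∧
    G.IsClique (C : Set V) ∧
    (∀ a ∈ I, ∀ b ∈ I, ¬ G.Adj a b) ∧
    yl.Nodup ∧ yl.toFinset = I ∧
    yl.Chain' (fun a b => G.neighborSet b ⊆ G.neighborSet a) ∧
    xl.Nodup ∧ xl.toFinset = C ∧
    xl.Chain' (fun a b => insert a (G.neighborSet a) ⊆ insert b (G.neighborSet b))



lemma chain'_rel_getLast {α : Type*} {r : α → α → Prop} (hrefl : ∀ a, r a a)
    (htrans : ∀ a b c, r a b → r b c → r a c) :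
    ∀ (l : List α), l.Chain' r → ∀ a ∈ l, ∀ h : l ≠ [], r a (l.getLast h) := by
  intro l
  induction l with
  | nil => intro _ a ha; simp at ha
  | cons b t ih =>
    intro hch a ha h
    rcases eq_or_ne t [] with rfl | ht
    · simp at ha; subst ha; simpa using hrefl _
    · rw [List.getLast_cons ht]
      rcases List.mem_cons.mp ha with rfl | ha'
      · obtain ⟨c, t', rfl⟩ := List.exists_cons_of_ne_nil ht
        have h1 : r a c := (List.isChain_cons.mp hch).1 c rfl
        exact htrans _ _ _ h1 (ih (List.IsChain.tail hch) c (by simp) ht)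
      · exact ih (List.IsChain.tail hch) a ha' ht

/-- For any connected threshold graph with at least two vertices, the quadruple
Roman domination number equals 5. -/
theorem gamma4R_of_threshold {V : Type*} [Fintype V] (G : SimpleGraph V)
    (hconn : G.Connected) (hcard : 2 ≤ Fintype.card V)
    (hthr : IsThresholdGraph G) : gamma4R G = 5 := by
  obtain ⟨C, I, xl, yl, hcov, hdisj, hclique, hindep, -, -, -, hxlnd, hxlF, hxlch⟩ := hthr
  -- every vertex has a neighbor
  have hnb : ∀ v : V, ∃ u, G.Adj v u := by
    intro v
    obtain ⟨w, hw⟩ := Fintype.exists_ne_of_one_lt_card (by omega) v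
    obtain ⟨p⟩ := hconn.preconnected v w
    cases p with
    | nil => exact absurd rfl hw
    | cons h q => exact ⟨_, h⟩
  have hxl : xl ≠ [] := by
    intro h
    subst h
    have hC : C = ∅ := by simpa using hxlF.symm
    obtain ⟨v⟩ : Nonempty V := Fintype.card_pos_iff.mp (by omega)
    obtain ⟨u, hu⟩ := hnb v
    have hvI : v ∈ I := (hcov v).resolve_left (by simp [hC])
    have huI : u ∈ I := (hcov u).resolve_left (by simp [hC])
    exact hindep v hvI u huI hu
  set u₀ := xl.getLast hxl with hu₀
  have hu₀C : u₀ ∈ C := by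
    rw [← hxlF]; exact List.mem_toFinset.mpr (List.getLast_mem hxl)
  -- u₀ is a universal vertex
  have huniv : ∀ v : V, v ≠ u₀ → G.Adj u₀ v := by
    intro v hv
    rcases hcov v with hvC | hvI
    · exact hclique hu₀C hvC (Ne.symm hv)
    · obtain ⟨u, hu⟩ := hnb v
      have huC : u ∈ C := by
        refine (hcov u).resolve_right fun huI => hindep v hvI u huI hu
      have hux : u ∈ xl := List.mem_toFinset.mp (hxlF ▸ huC)
      have hr : insert u (G.neighborSet u) ⊆ insert u₀ (G.neighborSet u₀) :=
        chain'_rel_getLast (r := fun a b => insert a (G.neighborSet a) ⊆ insert b (G.neighborSet b)) (fun a => subset_rfl)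
          (fun a b c h1 h2 => h1.trans h2) xl hxlch u hux hxl
      have hvmem : v ∈ insert u₀ (G.neighborSet u₀) :=
        hr (Set.mem_insert_of_mem _ hu.symm)
      rcases hvmem with h | h
      · exact absurd h hv
      · exact h
  -- the optimal function
  set f : V → ℕ := fun v => if v = u₀ then 5 else 0 with hfdef
  have hf : Is4RDF G f := by
    constructor
    · intro v; by_cases h : v = u₀ <;> simp [hfdef, h]
    · intro x hx
      have hxne : x ≠ u₀ := by
        intro h; simp [hfdef, h] at hx
      have hmem : u₀ ∈ G.neighborFinset x := by
        rw [SimpleGraph.mem_neighborFinset]; exact (huniv x hxne).symm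
      have hsum : ∑ v ∈ G.neighborFinset x, f v = 5 := by
        rw [Finset.sum_eq_single_of_mem u₀ hmem (fun b _ hb => by simp [hfdef, hb])]
        simp [hfdef]
      have hcard : ((G.neighborFinset x).filter fun y => f y ≠ 0).card ≤ 1 := by
        refine Finset.card_le_one.mpr fun a ha b hb => ?_
        have ha' : a = u₀ := by
          by_contra h; simp [hfdef, h] at ha
        have hb' : b = u₀ := by
          by_contra h; simp [hfdef, h] at hb
        rw [ha', hb']
      rw [hsum]; omega
  have hw : rdfWeight f = 5 := by
    unfold rdfWeight
    rw [Finset.sum_eq_single_of_mem u₀ (Finset.mem_univ _)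
      (fun b _ hb => by simp [hfdef, hb])]
    simp [hfdef]
  have h5 : 5 ∈ {w | ∃ f, Is4RDF G f ∧ rdfWeight f = w} := ⟨f, hf, hw⟩
  refine le_antisymm (Nat.sInf_le h5) (le_csInf ⟨5, h5⟩ ?_)
  rintro w ⟨g, hg, rfl⟩
  -- lower bound: any 4RDF has weight at least 5
  by_contra hlt
  push_neg at hlt
  have hle4 : ∑ v, g v ≤ 4 := by
    have : rdfWeight g < 5 := hlt
    unfold rdfWeight at this; omega
  by_cases hex : ∃ x, g x ≤ 3
  · obtain ⟨x, hx3⟩ := hex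
    have hcond := hg.2 x hx3
    have hxn : x ∉ G.neighborFinset x := by
      simp [SimpleGraph.mem_neighborFinset]
    have hsub : g x + ∑ v ∈ G.neighborFinset x, g v ≤ 4 := by
      calc g x + ∑ v ∈ G.neighborFinset x, g v
          = ∑ v ∈ insert x (G.neighborFinset x), g v := (Finset.sum_insert hxn).symm
        _ ≤ ∑ v, g v := Finset.sum_le_sum_of_subset (Finset.subset_univ _)
        _ ≤ 4 := hle4
    have hk0 : ((G.neighborFinset x).filter fun y => g y ≠ 0).card = 0 := by omega
    have hall : ∀ y ∈ G.neighborFinset x, g y = 0 := by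
      intro y hy
      by_contra h
      have : y ∈ (G.neighborFinset x).filter fun y => g y ≠ 0 :=
        Finset.mem_filter.mpr ⟨hy, h⟩
      rw [Finset.card_eq_zero] at hk0
      simp [hk0] at this
    have hs0 : ∑ v ∈ G.neighborFinset x, g v = 0 := Finset.sum_eq_zero hall
    omega
  · push_neg at hex
    obtain ⟨a, b, hab⟩ := Fintype.exists_pair_of_one_lt_card (α := V) (by omega)
    have : g a + g b ≤ ∑ v, g v := by
      calc g a + g b = ∑ v ∈ ({a, b} : Finset V), g v := (Finset.sum_pair hab).symm
        _ ≤ ∑ v, g v := Finset.sum_le_sum_of_subset (Finset.subset_univ _)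
    have ha := hex a
    have hb := hex b
    omega
end

section
/- If G is an efficient domination graph, then γ_{4R}(G) ≤ 5·γ(G). -/
open scoped Classical
open Finset

/-- If `G` has an efficient dominating set, then `γ₄R(G) ≤ 5·γ(G)`. -/
theorem gamma4R_le_of_efficient {V : Type*} [Fintype V] (G : SimpleGraph V)
    (h : ∃ D : Finset V, IsEfficientDomSet G D) :
    gamma4R G ≤ 5 * gammaDom G := by
  obtain ⟨D, hD⟩ := h
  set f : V → ℕ := fun v => if v ∈ D then 5 else 0 with hf
  have hfD : ∀ v ∈ D, f v = 5 := fun v hv => by simp [hf, hv]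
  have hfN : ∀ v, v ∉ D → f v = 0 := fun v hv => by simp [hf, hv]
  have hRDF : Is4RDF G f := by
    constructor
    · intro v
      by_cases hv : v ∈ D <;> simp [hf, hv]
    · intro x hx
      have hxD : x ∉ D := by
        intro hxD
        rw [hfD x hxD] at hx; omega
      obtain ⟨u, ⟨huD, hu⟩, huniq⟩ := hD x
      have hadj : G.Adj u x := hu.resolve_left (fun he => hxD (he ▸ huD))
      have huN : u ∈ G.neighborFinset x := by
        rw [SimpleGraph.mem_neighborFinset]; exact hadj.symm
      have hfilter : (G.neighborFinset x).filter (fun y => f y ≠ 0) = {u} := by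
        ext y
        simp only [Finset.mem_filter, Finset.mem_singleton, SimpleGraph.mem_neighborFinset]
        constructor
        · rintro ⟨hyx, hy0⟩
          have hyD : y ∈ D := by
            by_contra hyD
            exact hy0 (hfN y hyD)
          exact huniq y ⟨hyD, Or.inr hyx.symm⟩
        · rintro rfl
          exact ⟨hadj.symm, by rw [hfD _ huD]; omega⟩
      have hsum : 5 ≤ ∑ v ∈ G.neighborFinset x, f v := by
        have := Finset.single_le_sum (f := f) (fun i _ => Nat.zero_le _) huN
        rw [hfD u huD] at this
        exact this
      rw [hfilter]
      simp only [Finset.card_singleton]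
      omega
  have hweight : rdfWeight f = 5 * D.card := by
    rw [rdfWeight]
    rw [← Finset.sum_filter_add_sum_filter_not Finset.univ (fun v => v ∈ D)]
    have h1 : (Finset.univ.filter (fun v => v ∈ D)) = D := by
      ext v; simp
    have h2 : ∑ v ∈ Finset.univ.filter (fun v => ¬ v ∈ D), f v = 0 := by
      apply Finset.sum_eq_zero
      intro v hv
      exact hfN v (Finset.mem_filter.mp hv).2
    rw [h1, h2, Finset.sum_congr rfl hfD]
    simp [mul_comm]
  have h1 : gamma4R G ≤ 5 * D.card := Nat.sInf_le ⟨f, hRDF, hweight⟩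
  have hdom : IsDomSet G D := by
    intro v hv
    obtain ⟨u, ⟨huD, hu⟩, _⟩ := hD v
    exact ⟨u, huD, hu.resolve_left (fun he => hv (he ▸ huD))⟩
  have hne : {n | ∃ S : Finset V, IsDomSet G S ∧ S.card = n}.Nonempty :=
    ⟨D.card, D, hdom, rfl⟩
  obtain ⟨S, hS, hScard⟩ := Nat.sInf_mem hne
  -- every efficient dominating set has cardinality ≤ any dominating set
  have hchoice : ∀ d ∈ D, ∃ s ∈ S, s = d ∨ G.Adj s d := by
    intro d _
    by_cases hdS : d ∈ S
    · exact ⟨d, hdS, Or.inl rfl⟩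
    · obtain ⟨s, hsS, hs⟩ := hS d hdS
      exact ⟨s, hsS, Or.inr hs⟩
  choose φ hφS hφ using hchoice
  have hcard : D.card ≤ S.card := by
    apply Finset.card_le_card_of_injOn (fun d => if hd : d ∈ D then φ d hd else d)
    · intro d hd
      simp only [hd, dif_pos]
      exact Finset.mem_coe.mpr (by rw [dif_pos (Finset.mem_coe.mp hd)]; exact hφS d _)
    · intro d1 hd1 d2 hd2 heq
      simp only [Finset.mem_coe] at hd1 hd2
      simp only [hd1, hd2, dif_pos] at heq
      obtain ⟨u, _, huniq⟩ := hD (φ d2 hd2)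
      have e1 : d1 = u := huniq d1 ⟨hd1, by rw [← heq]; exact (hφ d1 hd1).imp Eq.symm SimpleGraph.Adj.symm⟩
      have e2 : d2 = u := huniq d2 ⟨hd2, (hφ d2 hd2).imp Eq.symm SimpleGraph.Adj.symm⟩
      rw [e1, e2]
    
  have : D.card ≤ gammaDom G := by
    rw [gammaDom, ← hScard] at *
    omega
  omega
end

section
/- If D is an efficient dominating set of a graph G, then γ(G) = |D|, i.e., D is a minimum dominating set. -/
open scoped Classical
open Finset

/-- An efficient dominating set is a minimum dominating set: `γ(G) = |D|`. -/
theorem gammaDom_eq_card_of_efficient {V : Type*} [Fintype V] (G : SimpleGraph V)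
    (D : Finset V) (hD : IsEfficientDomSet G D) :
    gammaDom G = D.card := by
  have hdom : IsDomSet G D := by
    intro v hv
    obtain ⟨u, ⟨huD, hu⟩, _⟩ := hD v
    exact ⟨u, huD, hu.resolve_left (fun h => hv (h ▸ huD))⟩
  apply le_antisymm
  · exact Nat.sInf_le (show D.card ∈ {n | ∃ D : Finset V, IsDomSet G D ∧ D.card = n} from ⟨D, hdom, rfl⟩)
  · apply le_csInf ⟨D.card, show D.card ∈ {n | ∃ D : Finset V, IsDomSet G D ∧ D.card = n} from ⟨D, hdom, rfl⟩⟩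
    rintro n ⟨D', hD', rfl⟩
    -- each u ∈ D is dominated by some vertex of D'
    have hchoice : ∀ u : V, ∃ w ∈ D', w = u ∨ G.Adj w u := by
      intro u
      by_cases hu : u ∈ D'
      · exact ⟨u, hu, Or.inl rfl⟩
      · obtain ⟨w, hw, hadj⟩ := hD' u hu
        exact ⟨w, hw, Or.inr hadj⟩
    choose f hf1 hf2 using hchoice
    apply Finset.card_le_card_of_injOn f (fun u _ => hf1 u)
    intro u1 hu1 u2 hu2 heq
    obtain ⟨w, hw, huniq⟩ := hD (f u1)
    have h1 : u1 ∈ D ∧ (u1 = f u1 ∨ G.Adj u1 (f u1)) := by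
      refine ⟨hu1, ?_⟩
      rcases hf2 u1 with h | h
      · exact Or.inl h.symm
      · exact Or.inr h.symm
    have h2 : u2 ∈ D ∧ (u2 = f u1 ∨ G.Adj u2 (f u1)) := by
      refine ⟨hu2, ?_⟩
      rw [heq]
      rcases hf2 u2 with h | h
      · exact Or.inl h.symm
      · exact Or.inr h.symm
    rw [huniq u1 h1, huniq u2 h2]
end

section
/- Let G be a graph and let G' be obtained from G by attaching r ≥ 5 pendant vertices to each vertex of G and subdividing each original edge of G with two new vertices. Then the original vertex set V(G) is an efficient dominating set of G', and γ_{4R}(G') = 5·γ(G') = 5|V(G)|. -/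
open scoped Classical
open Finset

/-- The graph obtained from `G` by attaching `r` pendant leaves to each vertex and
subdividing each edge with two new vertices: vertex `Sum.inl v` is an original
vertex, `Sum.inr (Sum.inl (v, j))` is the `j`-th leaf at `v`, and for each
adjacent pair `e = (u, w)` the vertex `Sum.inr (Sum.inr e)` is the subdivision
vertex next to `u` on the edge `uw`. -/
def subdivPendant {V : Type*} (G : SimpleGraph V) (r : ℕ) :
    SimpleGraph (V ⊕ ((V × Fin r) ⊕ {e : V × V // G.Adj e.1 e.2})) where
  Adj a b :=
    match a, b with
    | Sum.inl u, Sum.inr (Sum.inl (v, _)) => u = v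
    | Sum.inr (Sum.inl (v, _)), Sum.inl u => u = v
    | Sum.inl u, Sum.inr (Sum.inr e) => u = e.val.1
    | Sum.inr (Sum.inr e), Sum.inl u => u = e.val.1
    | Sum.inr (Sum.inr e), Sum.inr (Sum.inr e') =>
        e.val.1 = e'.val.2 ∧ e.val.2 = e'.val.1
    | _, _ => False
  symm := by
    constructor
    rintro (u | ⟨v, j⟩ | e) (u' | ⟨v', j'⟩ | e') h
    · exact h.elim
    · exact h
    · exact h
    · exact h
    · exact h.elim
    · exact h.elim
    · exact h
    · exact h.elim
    · exact ⟨h.2.symm, h.1.symm⟩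
  loopless := by
    constructor
    rintro (u | ⟨v, j⟩ | e) h
    · exact h
    · exact h
    · have he := e.prop
      rw [h.1] at he
      exact G.irrefl he


/-!
Every new vertex of `subdivPendant G r` has exactly one original neighbour, so the original
vertices form an efficient dominating set. A dominating set must contain, for each `v`, either
`v` or one of its leaves, whence `γ = |V|`. Five times the indicator of any dominating set is a
4RDF; conversely, in a 4RDF a leaf labelled at most `3` forces its support vertex to be labelled
nonzero and the two to sum to at least `5`, so each `v` with two of its leaves carries weight
at least `5`.
-/

section Domination

variable {W : Type*} [Fintype W] {H : SimpleGraph W}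

lemma IsEfficientDomSet.isDomSet {D : Finset W} (hD : IsEfficientDomSet H D) :
    IsDomSet H D := by
  intro v hv
  obtain ⟨u, ⟨huD, rfl | hadj⟩, -⟩ := hD v
  · exact absurd huD hv
  · exact ⟨u, huD, hadj⟩

lemma gammaDom_le_card {D : Finset W} (hD : IsDomSet H D) : gammaDom H ≤ #D :=
  Nat.sInf_le ⟨D, hD, rfl⟩

lemma le_gammaDom {n : ℕ} (h : ∀ D, IsDomSet H D → n ≤ #D) : n ≤ gammaDom H :=
  le_csInf ⟨_, univ, fun v hv => absurd (mem_univ v) hv, rfl⟩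
    fun _ ⟨D, hD, hn⟩ => hn ▸ h D hD

lemma le_gamma4R {n : ℕ} (h : ∀ f, Is4RDF H f → n ≤ rdfWeight f) : n ≤ gamma4R H :=
  le_csInf ⟨_, fun _ => 5, ⟨fun _ => le_rfl, fun _ h => absurd h (by norm_num)⟩, rfl⟩
    fun _ ⟨f, hf, hw⟩ => hw ▸ h f hf

/-- Every neighbour of a vertex outside `D` that carries a nonzero label carries `5`,
so the quadruple Roman condition reads `5k ≥ k + 4` with `k ≥ 1` such neighbours. -/
lemma IsDomSet.is4RDF_five_mul_indicator {D : Finset W} (hD : IsDomSet H D) :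
    Is4RDF H fun v => if v ∈ D then 5 else 0 := by
  refine ⟨fun v => by dsimp only; split_ifs <;> omega, fun x hx => ?_⟩
  have hxD : x ∉ D := fun h => by simp [h] at hx
  obtain ⟨u, huD, hux⟩ := hD x hxD
  have hlabelled : (H.neighborFinset x).filter (fun y => (if y ∈ D then 5 else 0) ≠ 0) =
      H.neighborFinset x ∩ D := by
    rw [← filter_mem_eq_inter]
    exact filter_congr fun y _ => by split_ifs with h <;> simp [h]
  have hpos : 0 < #(H.neighborFinset x ∩ D) :=
    card_pos.2 ⟨u, mem_inter.2 ⟨(H.mem_neighborFinset x u).2 hux.symm, huD⟩⟩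
  dsimp only
  rw [if_neg hxD, sum_ite_mem, hlabelled, sum_const, smul_eq_mul]
  omega

lemma gamma4R_le_five_mul_card {D : Finset W} (hD : IsDomSet H D) :
    gamma4R H ≤ 5 * #D := by
  refine Nat.sInf_le ⟨_, hD.is4RDF_five_mul_indicator, ?_⟩
  rw [rdfWeight, ← sum_filter, filter_mem_eq_inter, univ_inter, sum_const, smul_eq_mul,
    mul_comm]

end Domination

section Leaves

variable {W : Type*} [Fintype W] {H : SimpleGraph W} {x y u : W}

lemma IsDomSet.mem_or_mem_of_neighborFinset_eq {D : Finset W} (hD : IsDomSet H D)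
    (hx : H.neighborFinset x = {u}) : x ∈ D ∨ u ∈ D := by
  by_cases hxD : x ∈ D
  · exact Or.inl hxD
  · obtain ⟨w, hwD, hwx⟩ := hD x hxD
    have hw : w ∈ H.neighborFinset x := (H.mem_neighborFinset x w).2 hwx.symm
    rw [hx, mem_singleton] at hw
    exact Or.inr (hw ▸ hwD)

lemma Is4RDF.five_le_add_of_neighborFinset_eq {f : W → ℕ} (hf : Is4RDF H f)
    (hx : H.neighborFinset x = {u}) (hfx : f x ≤ 3) : 5 ≤ f x + f u := by
  have h := hf.2 x hfx
  rw [hx, sum_singleton, filter_singleton] at h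
  by_cases hu : f u = 0 <;> simp [hu] at h <;> omega

lemma Is4RDF.five_le_add_add_of_two_leaves {f : W → ℕ} (hf : Is4RDF H f)
    (hx : H.neighborFinset x = {u}) (hy : H.neighborFinset y = {u}) :
    5 ≤ f u + (f x + f y) := by
  by_cases hfx : f x ≤ 3
  · have := hf.five_le_add_of_neighborFinset_eq hx hfx
    omega
  by_cases hfy : f y ≤ 3
  · have := hf.five_le_add_of_neighborFinset_eq hy hfy
    omega
  omega

end Leaves

section SubdivPendant

variable {V : Type*} {G : SimpleGraph V} {r : ℕ}

/-- The original vertex whose closed neighbourhood in `subdivPendant G r` contains a given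
vertex. -/
def subdivPendantOrigin : V ⊕ ((V × Fin r) ⊕ {e : V × V // G.Adj e.1 e.2}) → V
  | Sum.inl v => v
  | Sum.inr (Sum.inl (v, _)) => v
  | Sum.inr (Sum.inr e) => e.val.1

lemma subdivPendant_inl_eq_or_adj_iff (u : V)
    (y : V ⊕ ((V × Fin r) ⊕ {e : V × V // G.Adj e.1 e.2})) :
    (Sum.inl u = y ∨ (subdivPendant G r).Adj (Sum.inl u) y) ↔ u = subdivPendantOrigin y := by
  rcases y with v | ⟨v, j⟩ | e <;> simp [subdivPendant, subdivPendantOrigin]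

lemma subdivPendant_neighborFinset_leaf [Fintype V] (v : V) (j : Fin r) :
    (subdivPendant G r).neighborFinset (Sum.inr (Sum.inl (v, j))) = {Sum.inl v} := by
  ext y
  rw [SimpleGraph.mem_neighborFinset, mem_singleton]
  rcases y with u | ⟨w, i⟩ | e <;> simp [subdivPendant, eq_comm]

variable [Fintype V]

lemma isEfficientDomSet_subdivPendant (G : SimpleGraph V) (r : ℕ) :
    IsEfficientDomSet (subdivPendant G r) (univ.image Sum.inl) := by
  intro y
  refine ⟨Sum.inl (subdivPendantOrigin y),
    ⟨mem_image_of_mem _ (mem_univ _), (subdivPendant_inl_eq_or_adj_iff _ y).2 rfl⟩, ?_⟩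
  rintro x ⟨hx, hxy⟩
  obtain ⟨u, -, rfl⟩ := mem_image.1 hx
  rw [(subdivPendant_inl_eq_or_adj_iff u y).1 hxy]

/-- The leaf `(v, 0)` is dominated by itself or by `v`, and both have origin `v`. -/
lemma card_le_card_of_isDomSet_subdivPendant (hr : 0 < r)
    {D : Finset (V ⊕ ((V × Fin r) ⊕ {e : V × V // G.Adj e.1 e.2}))}
    (hD : IsDomSet (subdivPendant G r) D) : Fintype.card V ≤ #D := by
  refine card_univ (α := V) ▸ card_le_card_of_surjOn subdivPendantOrigin fun v _ => ?_
  rcases hD.mem_or_mem_of_neighborFinset_eq (subdivPendant_neighborFinset_leaf v ⟨0, hr⟩)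
    with h | h
  · exact ⟨_, h, rfl⟩
  · exact ⟨_, h, rfl⟩

lemma five_mul_card_le_rdfWeight_subdivPendant (hr : 2 ≤ r)
    {f : V ⊕ ((V × Fin r) ⊕ {e : V × V // G.Adj e.1 e.2}) → ℕ}
    (hf : Is4RDF (subdivPendant G r) f) : 5 * Fintype.card V ≤ rdfWeight f := by
  have hleaves (v : V) : 5 ≤ f (Sum.inl v) + ∑ j : Fin r, f (Sum.inr (Sum.inl (v, j))) := by
    let j₀ : Fin r := ⟨0, by omega⟩
    let j₁ : Fin r := ⟨1, by omega⟩
    have hpair : f (Sum.inr (Sum.inl (v, j₀))) + f (Sum.inr (Sum.inl (v, j₁))) ≤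
        ∑ j : Fin r, f (Sum.inr (Sum.inl (v, j))) := by
      have hne : j₀ ≠ j₁ := by simp [j₀, j₁, Fin.ext_iff]
      rw [← sum_pair (f := fun j => f (Sum.inr (Sum.inl (v, j)))) hne]
      exact sum_le_sum_of_subset (subset_univ _)
    have := hf.five_le_add_add_of_two_leaves (subdivPendant_neighborFinset_leaf v j₀)
      (subdivPendant_neighborFinset_leaf v j₁)
    omega
  calc 5 * Fintype.card V = ∑ _v : V, 5 := by simp [mul_comm]
    _ ≤ ∑ v : V, (f (Sum.inl v) + ∑ j : Fin r, f (Sum.inr (Sum.inl (v, j)))) :=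
        sum_le_sum fun v _ => hleaves v
    _ ≤ rdfWeight f := by
        rw [rdfWeight, Fintype.sum_sum_type, Fintype.sum_sum_type, Fintype.sum_prod_type,
          sum_add_distrib]
        omega

end SubdivPendant

/-- For `G'` obtained from `G` by attaching `r ≥ 5` leaves to each vertex and
subdividing each edge twice, the original vertices form an efficient dominating set
of `G'`, and `γ₄R(G') = 5·γ(G') = 5·|V(G)|`. -/
theorem gamma4R_subdivPendant {V : Type*} [Fintype V] (G : SimpleGraph V)
    (r : ℕ) (hr : 5 ≤ r) :
    IsEfficientDomSet (subdivPendant G r) (Finset.univ.image Sum.inl) ∧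
    gamma4R (subdivPendant G r) = 5 * gammaDom (subdivPendant G r) ∧
    gamma4R (subdivPendant G r) = 5 * Fintype.card V := by
  have hD := isEfficientDomSet_subdivPendant G r
  have hcard :
      #(univ.image (Sum.inl : V → V ⊕ ((V × Fin r) ⊕ {e : V × V // G.Adj e.1 e.2}))) =
        Fintype.card V := by
    rw [card_image_of_injective _ Sum.inl_injective, card_univ]
  have hdom : gammaDom (subdivPendant G r) = Fintype.card V :=
    le_antisymm (hcard ▸ gammaDom_le_card hD.isDomSet)
      (le_gammaDom fun _ => card_le_card_of_isDomSet_subdivPendant (by omega))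
  have h4R : gamma4R (subdivPendant G r) = 5 * Fintype.card V :=
    le_antisymm (hcard ▸ gamma4R_le_five_mul_card hD.isDomSet)
      (le_gamma4R fun _ => five_mul_card_le_rdfWeight_subdivPendant (by omega))
  exact ⟨hD, by rw [h4R, hdom], h4R⟩
end
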